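/- arXiv:math/0409590 — 4 statements merged into one kernel-verified Lean document; each statement's English description precedes it below -/
import Mathlib

section
/- If f : X → Y is a continuous open surjection between compact metrizable spaces, then the pushforward map P(f) : P(X) → P(Y) on spaces of probability measures with the weak-* topology is an open map. -/
/-!
Metrize `P(X)` by the Lévy–Prokhorov distance and fix `μ`. Partition `Y` into small pieces `B i`
with `f_*μ`-null frontiers, so that every `ν` near `f_*μ` has `ν (B i)` not much smaller than
`μ (f ⁻¹' B i)`, and cut `X` into small pieces `A j`. Since `f` is uniformly open, `B i` lies in
the image of the small ball around any point of `A j ∩ f ⁻¹' B i`, so `ν|B i` lifts to a measure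
carried by that ball; mixing these lifts in the proportions `μ (A j ∩ f ⁻¹' B i) / μ (f ⁻¹' B i)`
gives a preimage of `ν` close to `μ`. A measure carried by `f '' K`, `K` compact, has a lift
carried by `K`: it is a limit of discrete approximations carried by `f '' K`, which lift
trivially, and the image under `f_*` of the compact set of measures carried by `K` is closed.
-/

open Filter Function MeasureTheory Metric Set Topology
open scoped ENNReal

theorem MeasureTheory.FiniteMeasure.tendsto_map_of_ae_tendsto {ι Ω E : Type*} [MeasurableSpace Ω]
    [TopologicalSpace E] [MeasurableSpace E] [OpensMeasurableSpace E]
    {l : Filter ι} [l.IsCountablyGenerated] (ν : FiniteMeasure Ω)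
    {q : ι → Ω → E} {g : Ω → E} (hq : ∀ i, Measurable (q i)) (hg : Measurable g)
    (hlim : ∀ᵐ ω ∂(ν : Measure Ω), Tendsto (fun i ↦ q i ω) l (𝓝 (g ω))) :
    Tendsto (fun i ↦ ν.map (q i)) l (𝓝 (ν.map g)) := by
  rw [FiniteMeasure.tendsto_iff_forall_lintegral_tendsto]
  intro φ
  simp only [FiniteMeasure.toMeasure_map]
  have hφ : Measurable fun y ↦ (φ y : ℝ≥0∞) :=
    (ENNReal.continuous_coe.comp φ.continuous).measurable
  simp only [lintegral_map hφ hg, lintegral_map hφ (hq _)]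
  refine tendsto_lintegral_filter_of_dominated_convergence (fun _ ↦ edist 0 φ)
    (.of_forall fun i ↦ hφ.comp (hq i)) (.of_forall fun i ↦ .of_forall fun ω ↦ ?_)
    (by simpa using ENNReal.mul_ne_top (edist_ne_top 0 φ) (measure_ne_top _ _)) ?_
  · simp [φ.apply_le_edist_zero]
  · filter_upwards [hlim] with ω hω
    exact (ENNReal.continuous_coe.comp φ.continuous).tendsto _ |>.comp hω

theorem IsOpenMap.exists_pos_forall_ball_subset_image_ball {X Y : Type*} [PseudoMetricSpace X]
    [CompactSpace X] [PseudoMetricSpace Y] {f : X → Y} (hf : Continuous f) (hopen : IsOpenMap f)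
    {ε : ℝ} (hε : 0 < ε) : ∃ δ > 0, ∀ x, ball (f x) δ ⊆ f '' ball x ε := by
  -- A Lebesgue number of this cover of the compact graph of `f` is the required `δ`.
  obtain ⟨δ, hδ, hcover⟩ := lebesgue_number_lemma_of_metric
    (isCompact_range (continuous_id.prodMk hf))
    (c := fun z : X ↦ ball z (ε / 2) ×ˢ (f '' ball z (ε / 2)))
    (fun z ↦ isOpen_ball.prod (hopen _ isOpen_ball)) <| by
      rintro _ ⟨z, rfl⟩
      exact mem_iUnion.2
        ⟨z, mem_ball_self (half_pos hε), mem_image_of_mem f (mem_ball_self (half_pos hε))⟩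
  refine ⟨δ, hδ, fun x y hy ↦ ?_⟩
  obtain ⟨z, hz⟩ := hcover (x, f x) ⟨x, rfl⟩
  have hxy : (x, y) ∈ ball (x, f x) δ := by
    rw [← ball_prod_same]
    exact mk_mem_prod (mem_ball_self hδ) hy
  obtain ⟨hxz, x', hx'z, rfl⟩ := hz hxy
  refine ⟨x', ?_, rfl⟩
  have := dist_triangle_right x' x z
  rw [mem_ball] at hxz hx'z ⊢
  linarith

theorem measure_frontier_finset_sup_eq_zero {Ω ι : Type*} [TopologicalSpace Ω]
    [MeasurableSpace Ω] {μ : Measure Ω} {s : Finset ι} {t : ι → Set Ω}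
    (h : ∀ i ∈ s, μ (frontier (t i)) = 0) : μ (frontier (s.sup t)) = 0 := by
  induction s using Finset.cons_induction with
  | empty => simp
  | cons j s hj ih =>
    simp only [Finset.mem_cons, forall_eq_or_imp] at h
    rw [Finset.sup_cons]
    exact measure_mono_null ((frontier_union_subset _ _).trans
      (union_subset_union inter_subset_left inter_subset_right)) (measure_union_null h.1 (ih h.2))

theorem measure_frontier_disjointed_eq_zero {Ω ι : Type*} [TopologicalSpace Ω]
    [MeasurableSpace Ω] [Preorder ι] [LocallyFiniteOrderBot ι] {μ : Measure Ω} {t : ι → Set Ω}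
    (h : ∀ i, μ (frontier (t i)) = 0) (i : ι) : μ (frontier (disjointed t i)) = 0 := by
  rw [disjointed_apply, sdiff_eq]
  refine null_frontier_inter (h i) ?_
  rw [frontier_compl]
  exact measure_frontier_finset_sup_eq_zero fun j _ ↦ h j

theorem exists_finite_partition_diam_lt_measure_frontier_eq_zero {Z : Type*}
    [PseudoMetricSpace Z] [CompactSpace Z] [MeasurableSpace Z] [OpensMeasurableSpace Z]
    (μ : Measure Z) [SFinite μ] {ε : ℝ} (hε : 0 < ε) :
    ∃ (n : ℕ) (B : Fin n → Set Z), (∀ i, MeasurableSet (B i)) ∧ Pairwise (Disjoint on B) ∧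
      ⋃ i, B i = univ ∧ (∀ i, diam (B i) < ε) ∧ ∀ i, μ (frontier (B i)) = 0 := by
  have hr (z : Z) : ∃ r ∈ Ioo 0 (ε / 2), μ (frontier (ball z r)) = 0 := by
    simpa only [thickening_singleton] using exists_null_frontier_thickening μ {z} (half_pos hε)
  choose r hr hrμ using hr
  obtain ⟨t, ht⟩ := isCompact_univ.elim_finite_subcover (fun z ↦ ball z (r z))
    (fun _ ↦ isOpen_ball) fun z _ ↦ mem_iUnion.2 ⟨z, mem_ball_self (hr z).1⟩
  let c (i : Fin t.card) : Z := t.equivFin.symm i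
  let b (i : Fin t.card) := ball (c i) (r (c i))
  refine ⟨t.card, disjointed b, fun i ↦ ?_, disjoint_disjointed b, ?_, fun i ↦ ?_,
    measure_frontier_disjointed_eq_zero fun i ↦ hrμ _⟩
  · rw [disjointed_eq_inter_compl]
    exact measurableSet_ball.inter (.iInter fun j ↦ .iInter fun _ ↦ measurableSet_ball.compl)
  · rw [iUnion_disjointed, eq_univ_iff_forall]
    intro y
    obtain ⟨z, hz, hyz⟩ := mem_iUnion₂.1 (ht (mem_univ y))
    exact mem_iUnion.2 ⟨t.equivFin ⟨z, hz⟩, by simpa [b, c] using hyz⟩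
  · calc diam (disjointed b i) ≤ diam (b i) := diam_mono (disjointed_subset b i) isBounded_ball
      _ ≤ 2 * r (c i) := diam_ball (hr _).1.le
      _ < ε := by linarith [(hr (c i)).2]

theorem MeasureTheory.Measure.sum_restrict_eq_self_of_iUnion_eq_univ {Ω ι : Type*}
    [MeasurableSpace Ω] [Fintype ι] (μ : Measure Ω) {A : ι → Set Ω} (hAm : ∀ i, MeasurableSet (A i))
    (hAd : Pairwise (Disjoint on A)) (hAU : ⋃ i, A i = univ) : ∑ i, μ.restrict (A i) = μ := by
  rw [← Measure.sum_fintype, ← Measure.restrict_iUnion hAd hAm, hAU, Measure.restrict_univ]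

theorem exists_map_eq_of_measure_compl_image_eq_zero {X Y : Type*} [TopologicalSpace X]
    [T2Space X] [MeasurableSpace X] [BorelSpace X] [PseudoMetricSpace Y]
    [MeasurableSpace Y] [BorelSpace Y] {f : X → Y} (hf : Continuous f) {K : Set X}
    (hK : IsCompact K) (ν : Measure Y) [IsFiniteMeasure ν] (hν : ν (f '' K)ᶜ = 0) :
    ∃ ρ : Measure X, ρ Kᶜ = 0 ∧ ρ.map f = ν := by
  obtain rfl | ⟨x₀, hx₀⟩ := K.eq_empty_or_nonempty
  · refine ⟨0, rfl, ?_⟩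
    rw [Measure.map_zero, eq_comm, ← Measure.measure_univ_eq_zero]
    simpa using hν
  have : Nonempty X := ⟨x₀⟩
  have hfK : f x₀ ∈ f '' K := mem_image_of_mem f hx₀
  have : TopologicalSpace.SeparableSpace (f '' K) := (hK.image hf).isSeparable.separableSpace
  -- `q n` approximates the identity by simple functions with values in `f '' K`,
  -- and `p n` lifts `q n` through `f` into `K`.
  let q n := SimpleFunc.approxOn id measurable_id (f '' K) (f x₀) hfK n
  let p n := (q n).map (Function.invFunOn f K)
  have hpK n y : p n y ∈ K :=
    Function.invFunOn_mem (SimpleFunc.approxOn_mem measurable_id hfK n y)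
  have hfp n : f ∘ p n = q n :=
    funext fun y ↦ Function.invFunOn_eq (SimpleFunc.approxOn_mem measurable_id hfK n y)
  let ν' : FiniteMeasure Y := ⟨ν, inferInstance⟩
  let S : Set (FiniteMeasure X) := {ρ | ρ.mass ≤ ν'.mass ∧ ρ Kᶜ = 0}
  have hS : IsClosed ((fun ρ : FiniteMeasure X ↦ ρ.map f) '' S) :=
    ((isCompact_setOfPred_finiteMeasure_le_of_isCompact _ hK).image
      (FiniteMeasure.continuous_map hf)).isClosed
  have hlim : Tendsto (fun n ↦ ν'.map (q n)) atTop (𝓝 (ν'.map id)) :=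
    FiniteMeasure.tendsto_map_of_ae_tendsto ν' (fun n ↦ (q n).measurable) measurable_id <|
      measure_mono_null (fun y hy hyK ↦
        hy (SimpleFunc.tendsto_approxOn measurable_id hfK (subset_closure hyK))) hν
  rw [show ν'.map id = ν' from FiniteMeasure.toMeasure_injective (by simp)] at hlim
  obtain ⟨ρ, ⟨-, hρK⟩, hρ⟩ : ν' ∈ (fun ρ : FiniteMeasure X ↦ ρ.map f) '' S := by
    refine hS.mem_of_tendsto hlim
      (.of_forall fun n ↦ ⟨ν'.map (p n), ⟨FiniteMeasure.mass_map_le _ _, ?_⟩, ?_⟩)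
    · rw [FiniteMeasure.null_iff_toMeasure_null, FiniteMeasure.toMeasure_map,
        Measure.map_apply (p n).measurable hK.isClosed.isOpen_compl.measurableSet]
      simp [preimage_compl, show p n ⁻¹' K = univ from eq_univ_of_forall (hpK n)]
    · apply FiniteMeasure.toMeasure_injective
      simp [Measure.map_map hf.measurable (p n).measurable, hfp]
  refine ⟨ρ, (FiniteMeasure.null_iff_toMeasure_null _ _).1 hρK, ?_⟩
  simpa [ν'] using congrArg (fun ρ : FiniteMeasure Y ↦ (ρ : Measure Y)) hρ

section Lifting

variable {X Y : Type*} [MetricSpace X] [CompactSpace X] [MeasurableSpace X] [BorelSpace X]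
  [PseudoMetricSpace Y] [MeasurableSpace Y] [BorelSpace Y] {f : X → Y}

theorem exists_map_eq_measure_le_thickening_add_tsub (hf : Continuous f) (hsurj : Surjective f)
    {ε : ℝ} (hε : 0 < ε) {S : Set Y} (hS : ∀ x, f x ∈ S → S ⊆ f '' closedBall x ε)
    (α : Measure X) [IsFiniteMeasure α] (hα : α (f ⁻¹' S)ᶜ = 0)
    (β : Measure Y) [IsFiniteMeasure β] (hβ : β Sᶜ = 0) :
    ∃ α' : Measure X, α'.map f = β ∧
      ∀ E, MeasurableSet E → α E ≤ α' (thickening (2 * ε) E) + (α univ - β univ) := by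
  by_cases h0 : α univ = 0
  · obtain ⟨α', -, hα'⟩ := exists_map_eq_of_measure_compl_image_eq_zero hf isCompact_univ β
      (by simp [image_univ_of_surjective hsurj])
    exact ⟨α', hα', fun E _ ↦ by simp [measure_mono_null (subset_univ E) h0]⟩
  have : Nonempty X := nonempty_iff_univ_nonempty.2 (nonempty_of_measure_ne_zero h0)
  obtain ⟨N, A, hAm, hAd, hAU, hAdiam, -⟩ :=
    exists_finite_partition_diam_lt_measure_frontier_eq_zero α hε
  have hlift (j) (hj : α (A j) ≠ 0) :
      ∃ x ∈ A j, ∃ ρ : Measure X, ρ (closedBall x ε)ᶜ = 0 ∧ ρ.map f = β := by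
    obtain ⟨x, hxA, hxS⟩ : (A j ∩ f ⁻¹' S).Nonempty :=
      nonempty_of_measure_ne_zero (by rwa [measure_inter_conull hα])
    exact ⟨x, hxA, exists_map_eq_of_measure_compl_image_eq_zero hf (isCompact_closedBall x ε) β
      (measure_mono_null (compl_subset_compl.2 (hS x hxS)) hβ)⟩
  choose! x hxA ρ hρ hρf using hlift
  have hsum := α.sum_restrict_eq_self_of_iUnion_eq_univ hAm hAd hAU
  -- `α'` distributes the mass of `β` over the pieces `A j` in the proportions given by `α`.
  let w j := α (A j) / α univ
  have hw : ∑ j, w j = 1 := by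
    have hmass : ∑ j, α (A j) = α univ := by
      simpa [Measure.finsetSum_apply] using congrArg (· univ) hsum
    simp_rw [w, div_eq_mul_inv, ← Finset.sum_mul, hmass]
    exact ENNReal.mul_inv_cancel h0 (measure_ne_top _ _)
  refine ⟨∑ j, w j • ρ j, ?_, fun E hE ↦ ?_⟩
  · have hterm (j) : (w j • ρ j).map f = w j • β := by
      by_cases hj : α (A j) = 0
      · simp [w, hj]
      · rw [Measure.map_smul, hρf j hj]
    rw [Measure.map_finset_sum hf.measurable.aemeasurable]
    simp_rw [hterm, ← Finset.sum_smul, hw, one_smul]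
  have hpiece (j) :
      α (E ∩ A j) ≤ w j * ρ j (thickening (2 * ε) E) + w j * (α univ - β univ) := by
    by_cases hEA : α (E ∩ A j) = 0
    · simp [hEA]
    have hj : α (A j) ≠ 0 := fun h ↦ hEA (measure_mono_null inter_subset_right h)
    obtain ⟨e, heE, heA⟩ := nonempty_of_measure_ne_zero hEA
    have hball : closedBall (x j) ε ⊆ thickening (2 * ε) E := fun z hz ↦ by
      refine mem_thickening_iff.2 ⟨e, heE, ?_⟩
      have hxe : dist (x j) e < ε :=
        (dist_le_diam_of_mem isBounded_of_compactSpace (hxA j hj) heA).trans_lt (hAdiam j)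
      linarith [dist_triangle z (x j) e, mem_closedBall.1 hz]
    have hfull : ρ j (thickening (2 * ε) E) = β univ := by
      rw [measure_congr (ae_eq_univ.2 (measure_mono_null (compl_subset_compl.2 hball) (hρ j hj))),
        ← hρf j hj, Measure.map_apply hf.measurable .univ, preimage_univ]
    calc α (E ∩ A j) ≤ α (A j) := measure_mono inter_subset_right
      _ = w j * α univ := (ENNReal.div_mul_cancel h0 (measure_ne_top _ _)).symm
      _ ≤ w j * (β univ + (α univ - β univ)) := by gcongr; exact le_add_tsub
      _ = _ := by rw [hfull, mul_add]
  calc α E = ∑ j, α (E ∩ A j) := by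
        conv_lhs => rw [← hsum]
        simp [Measure.finsetSum_apply, Measure.restrict_apply hE]
    _ ≤ ∑ j, (w j * ρ j (thickening (2 * ε) E) + w j * (α univ - β univ)) :=
        Finset.sum_le_sum fun j _ ↦ hpiece j
    _ = (∑ j, w j • ρ j) (thickening (2 * ε) E) + (α univ - β univ) := by
        simp [Finset.sum_add_distrib, ← Finset.sum_mul, hw, Measure.finsetSum_apply]

theorem exists_map_eq_measure_le_thickening_add_sum {ι : Type*} [Fintype ι]
    (hf : Continuous f) (hsurj : Surjective f) {ε : ℝ} (hε : 0 < ε) {B : ι → Set Y}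
    (hBm : ∀ i, MeasurableSet (B i)) (hBd : Pairwise (Disjoint on B)) (hBU : ⋃ i, B i = univ)
    (hB : ∀ i x, f x ∈ B i → B i ⊆ f '' closedBall x ε)
    (μ : Measure X) [IsFiniteMeasure μ] (ν : Measure Y) [IsFiniteMeasure ν] :
    ∃ μ' : Measure X, μ'.map f = ν ∧ ∀ E, MeasurableSet E →
      μ E ≤ μ' (thickening (2 * ε) E) + ∑ i, (μ (f ⁻¹' B i) - ν (B i)) := by
  have hfBm i : MeasurableSet (f ⁻¹' B i) := hf.measurable (hBm i)
  have hlift (i) := exists_map_eq_measure_le_thickening_add_tsub hf hsurj hε (hB i)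
    (μ.restrict (f ⁻¹' B i)) (by simp [Measure.restrict_apply' (hfBm i)])
    (ν.restrict (B i)) (by simp [Measure.restrict_apply' (hBm i)])
  choose α' hα'f hα' using hlift
  refine ⟨∑ i, α' i, ?_, fun E hE ↦ ?_⟩
  · rw [Measure.map_finset_sum hf.measurable.aemeasurable]
    simp_rw [hα'f]
    exact ν.sum_restrict_eq_self_of_iUnion_eq_univ hBm hBd hBU
  have hsum := μ.sum_restrict_eq_self_of_iUnion_eq_univ hfBm
    (fun i j hij ↦ (hBd hij).preimage f) (by rw [← preimage_iUnion, hBU, preimage_univ])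
  calc μ E = ∑ i, μ.restrict (f ⁻¹' B i) E := by
        conv_lhs => rw [← hsum]
        rw [Measure.finsetSum_apply]
    _ ≤ ∑ i, (α' i (thickening (2 * ε) E) + (μ (f ⁻¹' B i) - ν (B i))) := by
        refine Finset.sum_le_sum fun i _ ↦ ?_
        simpa using hα' i E hE
    _ = _ := by rw [Finset.sum_add_distrib, Measure.finsetSum_apply]

end Lifting

theorem MeasureTheory.ProbabilityMeasure.exists_forall_levyProkhorovEDist_lt_mem {X : Type*}
    [PseudoMetricSpace X] [TopologicalSpace.SeparableSpace X] [MeasurableSpace X]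
    [OpensMeasurableSpace X]
    {μ : ProbabilityMeasure X} {U : Set (ProbabilityMeasure X)} (hU : U ∈ 𝓝 μ) :
    ∃ r > 0, ∀ μ' : ProbabilityMeasure X, levyProkhorovEDist (μ : Measure X) μ' < r → μ' ∈ U := by
  let h := LevyProkhorov.probabilityMeasureHomeomorph (Ω := X)
  have : h.symm ⁻¹' U ∈ 𝓝 (h μ) :=
    h.symm.continuous.continuousAt.preimage_mem_nhds (by simpa using hU)
  obtain ⟨r, hr, hrU⟩ := EMetric.mem_nhds_iff.1 this
  refine ⟨r, hr, fun μ' hμ' ↦ hrU ?_⟩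
  exact Metric.mem_eball'.2 hμ'

theorem MeasureTheory.ProbabilityMeasure.eventually_exists_map_eq_levyProkhorovEDist_lt
    {X Y : Type*} [MetricSpace X] [CompactSpace X] [MeasurableSpace X] [BorelSpace X]
    [PseudoMetricSpace Y] [CompactSpace Y] [MeasurableSpace Y] [BorelSpace Y] {f : X → Y}
    (hf : Continuous f) (hopen : IsOpenMap f) (hsurj : Surjective f) (μ : ProbabilityMeasure X)
    {r : ℝ≥0∞} (hr : 0 < r) :
    ∀ᶠ ν in 𝓝 (μ.map hf.measurable.aemeasurable), ∃ μ' : ProbabilityMeasure X,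
      μ'.map hf.measurable.aemeasurable = ν ∧ levyProkhorovEDist (μ : Measure X) μ' < r := by
  obtain ⟨t, -, ht0, htr⟩ := ENNReal.lt_iff_exists_real_btwn.1 hr
  have ht : 0 < t / 2 := half_pos (ENNReal.ofReal_pos.1 ht0)
  obtain ⟨δ, hδ, hball⟩ := hopen.exists_pos_forall_ball_subset_image_ball hf ht
  set μY := μ.map hf.measurable.aemeasurable
  obtain ⟨M, B, hBm, hBd, hBU, hBdiam, hBfr⟩ :=
    exists_finite_partition_diam_lt_measure_frontier_eq_zero (μY : Measure Y) hδ
  have hB i x (hx : f x ∈ B i) : B i ⊆ f '' closedBall x (t / 2) := fun y hy ↦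
    image_mono ball_subset_closedBall <| hball x <| mem_ball'.2 <|
      (dist_le_diam_of_mem isBounded_of_compactSpace hx hy).trans_lt (hBdiam i)
  have herr : Tendsto (fun ν : ProbabilityMeasure Y ↦
      ∑ i, ((μ : Measure X) (f ⁻¹' B i) - (ν : Measure Y) (B i))) (𝓝 μY) (𝓝 0) := by
    have := tendsto_finsetSum Finset.univ fun i _ ↦ ENNReal.Tendsto.sub tendsto_const_nhds
      (ProbabilityMeasure.tendsto_measure_of_null_frontier_of_tendsto' tendsto_id (hBfr i))
      (Or.inl (measure_ne_top (μY : Measure Y) (B i)))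
    simpa [μY, Measure.map_apply hf.measurable (hBm _)] using this
  filter_upwards [herr.eventually_lt_const hr] with ν hν
  obtain ⟨μ', hμ'f, hμ'⟩ := exists_map_eq_measure_le_thickening_add_sum hf hsurj ht hBm hBd hBU hB
    (μ : Measure X) (ν : Measure Y)
  have : IsProbabilityMeasure μ' := ⟨by
    rw [← preimage_univ (f := f), ← Measure.map_apply hf.measurable .univ, hμ'f, measure_univ]⟩
  have hle : levyProkhorovEDist (μ : Measure X) μ' ≤
      max (ENNReal.ofReal t) (∑ i, ((μ : Measure X) (f ⁻¹' B i) - (ν : Measure Y) (B i))) := by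
    refine levyProkhorovEDist_le_of_forall_le _ _ _ fun η E hη hηtop hE ↦ (hμ' E hE).trans ?_
    have htη : t ≤ η.toReal :=
      (ENNReal.ofReal_le_iff_le_toReal hηtop.ne).1 ((le_max_left _ _).trans hη.le)
    gcongr
    · linarith
    · exact (le_max_right _ _).trans hη.le
  exact ⟨⟨μ', this⟩, ProbabilityMeasure.toMeasure_injective hμ'f, hle.trans_lt (max_lt htr hν)⟩

theorem pushforward_probabilityMeasure_isOpenMap_of_isOpenMap
    {X Y : Type*} [TopologicalSpace X] [CompactSpace X] [TopologicalSpace.MetrizableSpace X]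
    [MeasurableSpace X] [BorelSpace X]
    [TopologicalSpace Y] [CompactSpace Y] [TopologicalSpace.MetrizableSpace Y]
    [MeasurableSpace Y] [BorelSpace Y]
    (f : X → Y) (hf : Continuous f) (hopen : IsOpenMap f)
    (hsurj : Function.Surjective f) :
    IsOpenMap
      (fun μ : ProbabilityMeasure X => μ.map hf.measurable.aemeasurable) := by
  let _ := TopologicalSpace.metrizableSpaceMetric X
  let _ := TopologicalSpace.metrizableSpaceMetric Y
  refine IsOpenMap.of_nhds_le fun μ U hU ↦ ?_
  obtain ⟨r, hr, hrU⟩ := ProbabilityMeasure.exists_forall_levyProkhorovEDist_lt_mem hU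
  filter_upwards [ProbabilityMeasure.eventually_exists_map_eq_levyProkhorovEDist_lt
    hf hopen hsurj μ hr] with ν ⟨μ', hμ'ν, hμ'⟩
  exact hμ'ν ▸ hrU μ' hμ'
end

section
/- Let K and L be compact convex polytopes in finite-dimensional real vector spaces and let f : K → L be a surjective affine map. Then f is an open map (with respect to the subspace topologies on K and L). -/
/-!
Near a point `y` of a polytope `L = conv T`, `L` agrees with the cone `y + ℝ≥0 (T - y)`: for some
`ε > 0`, every `b ∈ L` with `‖b - y‖ ≤ t ε` equals `y + t (z - y)` with `z ∈ L`. This is a conic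
Carathéodory argument: a nonnegative combination of the `x - y` can be rewritten over a linearly
independent subfamily, on which the coefficients are bounded by the norm of the combination.
For `a ∈ K` and `b` close to `f a`, write `b = f a + t (f x - f a)` using surjectivity; then
`t x + (1 - t) a` maps to `b` and, `K` being bounded, lies within `O(t)` of `a`.
-/

open Finset Filter Metric

section ConicCaratheodory

variable {ι F : Type*} [AddCommGroup F] [Module ℝ F] {w : ι → F}

theorem exists_mem_erase_sum_smul_eq_of_not_linearIndepOn [DecidableEq ι] {s : Finset ι}
    (hs : ¬LinearIndepOn ℝ w (s : Set ι)) {c : ι → ℝ} (hc : ∀ i ∈ s, 0 ≤ c i) :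
    ∃ j ∈ s, ∃ c' : ι → ℝ, (∀ i ∈ s.erase j, 0 ≤ c' i) ∧
      ∑ i ∈ s.erase j, c' i • w i = ∑ i ∈ s, c i • w i := by
  obtain ⟨g, hg, i₀, hi₀, hgi₀⟩ : ∃ g : ι → ℝ, ∑ i ∈ s, g i • w i = 0 ∧ ∃ i ∈ s, 0 < g i := by
    rw [linearIndepOn_iff''] at hs
    push Not at hs
    obtain ⟨t, g, hts, hgt, hsum, i, hit, hgi⟩ := hs
    have hsum' : ∑ i ∈ s, g i • w i = 0 := by
      rw [← sum_subset hts (fun i _ hi => by simp [hgt i hi]), hsum]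
    rcases hgi.lt_or_gt with hneg | hpos
    · exact ⟨-g, by simp [hsum'], i, hts hit, by simpa using hneg⟩
    · exact ⟨g, hsum', i, hts hit, hpos⟩
  -- Subtract the largest multiple `r • g` of the relation keeping all coefficients nonnegative.
  obtain ⟨j, hj, hmin⟩ := (s.filter (0 < g ·)).exists_min_image (fun i => c i / g i)
    ⟨i₀, mem_filter.2 ⟨hi₀, hgi₀⟩⟩
  rw [mem_filter] at hj
  set r := c j / g j
  refine ⟨j, hj.1, fun i => c i - r * g i, fun i hi => ?_, ?_⟩
  · have his := mem_of_mem_erase hi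
    rcases le_or_gt (g i) 0 with hgi | hgi
    · nlinarith [hc i his, div_nonneg (hc j hj.1) hj.2.le]
    · have := hmin i (mem_filter.2 ⟨his, hgi⟩)
      rw [le_div_iff₀ hgi] at this
      linarith
  · rw [sum_erase _ (by simp [r, div_mul_cancel₀ _ hj.2.ne'])]
    simp [sub_smul, mul_smul, sum_sub_distrib, ← smul_sum, hg]

theorem exists_subset_linearIndepOn_sum_smul_eq (s : Finset ι) {c : ι → ℝ}
    (hc : ∀ i ∈ s, 0 ≤ c i) :
    ∃ u ⊆ s, LinearIndepOn ℝ w (u : Set ι) ∧ ∃ c' : ι → ℝ, (∀ i ∈ u, 0 ≤ c' i) ∧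
      ∑ i ∈ u, c' i • w i = ∑ i ∈ s, c i • w i := by
  classical
  let reps := s.powerset.filter fun u =>
    ∃ c' : ι → ℝ, (∀ i ∈ u, 0 ≤ c' i) ∧ ∑ i ∈ u, c' i • w i = ∑ i ∈ s, c i • w i
  obtain ⟨u, hu, hmin⟩ := reps.exists_min_image card
    ⟨s, mem_filter.2 ⟨mem_powerset_self s, c, hc, rfl⟩⟩
  obtain ⟨hus, c', hc', hsum⟩ := mem_filter.1 hu
  refine ⟨u, mem_powerset.1 hus, ?_, c', hc', hsum⟩
  by_contra hli
  obtain ⟨j, hj, c'', hc'', hsum'⟩ := exists_mem_erase_sum_smul_eq_of_not_linearIndepOn hli hc'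
  have := hmin (u.erase j) (mem_filter.2
    ⟨mem_powerset.2 ((u.erase_subset j).trans (mem_powerset.1 hus)), c'', hc'', hsum'.trans hsum⟩)
  exact (card_erase_lt_of_mem hj).not_ge this

end ConicCaratheodory

section Normed

variable {ι F : Type*} [NormedAddCommGroup F] [NormedSpace ℝ F] {w : ι → F}

theorem LinearIndepOn.eventually_sum_abs_le {u : Finset ι} (hu : LinearIndepOn ℝ w (u : Set ι)) :
    ∀ᶠ C in atTop, ∀ c : ι → ℝ, ∑ i ∈ u, |c i| ≤ C * ‖∑ i ∈ u, c i • w i‖ := by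
  let A := Fintype.linearCombination ℝ (fun i : u => w i)
  obtain ⟨K, -, hK⟩ := A.injective_iff_antilipschitz.1
    (linearIndependent_iff_injective_fintypeLinearCombination.1 hu)
  filter_upwards [eventually_ge_atTop (u.card * K : ℝ)] with C hC c
  have hA : A (fun i => c i) = ∑ i ∈ u, c i • w i := by
    rw [Fintype.linearCombination_apply, ← sum_coe_sort u (fun i => c i • w i)]
  calc ∑ i ∈ u, |c i| = ∑ i : u, ‖c i‖ := (sum_coe_sort u _).symm
    _ ≤ u.card * ‖(fun i : u => c i)‖ := by
      simpa using Pi.sum_norm_apply_le_norm (fun i : u => c i)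
    _ ≤ u.card * (K * ‖A (fun i => c i)‖) := by
      gcongr
      exact ZeroHomClass.bound_of_antilipschitz A hK _
    _ ≤ C * ‖∑ i ∈ u, c i • w i‖ := by
      rw [← mul_assoc, hA]
      gcongr

theorem eventually_exists_nonneg_sum_smul_eq_sum_le (w : ι → F) (s : Finset ι) :
    ∀ᶠ C in atTop, ∀ c : ι → ℝ, (∀ i ∈ s, 0 ≤ c i) → ∃ c' : ι → ℝ, (∀ i ∈ s, 0 ≤ c' i) ∧
      ∑ i ∈ s, c' i • w i = ∑ i ∈ s, c i • w i ∧ ∑ i ∈ s, c' i ≤ C * ‖∑ i ∈ s, c i • w i‖ := by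
  classical
  have hbound : ∀ᶠ C in atTop, ∀ u ∈ s.powerset, LinearIndepOn ℝ w (u : Set ι) →
      ∀ c : ι → ℝ, ∑ i ∈ u, |c i| ≤ C * ‖∑ i ∈ u, c i • w i‖ :=
    (eventually_all_finset _).2 fun u _ => eventually_imp_distrib_left.2 fun hu =>
      hu.eventually_sum_abs_le
  filter_upwards [hbound] with C hC c hc
  obtain ⟨u, hus, hu, c', hc', hsum⟩ := exists_subset_linearIndepOn_sum_smul_eq (w := w) s hc
  refine ⟨fun i => if i ∈ u then c' i else 0, fun i _ => ?_, ?_, ?_⟩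
  · by_cases hi : i ∈ u <;> simp [hi, hc']
  · simp only [ite_smul, zero_smul, sum_ite_mem, inter_eq_right.2 hus, hsum]
  · rw [sum_ite_mem, inter_eq_right.2 hus, ← hsum]
    exact (sum_le_sum fun i _ => le_abs_self (c' i)).trans (hC u (mem_powerset.2 hus) hu c')

theorem add_sum_smul_sub_mem_convexHull {T : Finset F} {y : F}
    (hy : y ∈ convexHull ℝ (T : Set F)) {c : F → ℝ} (hc : ∀ x ∈ T, 0 ≤ c x)
    (hc1 : ∑ x ∈ T, c x ≤ 1) : y + ∑ x ∈ T, c x • (x - y) ∈ convexHull ℝ (T : Set F) := by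
  obtain ⟨e, he, he1, hey⟩ := mem_convexHull'.1 hy
  refine mem_convexHull'.2 ⟨fun x => c x + (1 - ∑ x ∈ T, c x) * e x,
    fun x hx => add_nonneg (hc x hx) (mul_nonneg (by linarith) (he x hx)), ?_, ?_⟩
  · simp [sum_add_distrib, ← mul_sum, he1]
  · simp only [add_smul, mul_smul, smul_sub, sum_add_distrib, sum_sub_distrib, ← smul_sum,
      ← sum_smul, hey]
    module

theorem Finset.exists_pos_convexHull_inter_closedBall_subset_homothety_image (T : Finset F)
    {y : F} (hy : y ∈ convexHull ℝ (T : Set F)) :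
    ∃ ε > 0, ∀ t : ℝ, 0 ≤ t → convexHull ℝ (T : Set F) ∩ closedBall y (t * ε) ⊆
      AffineMap.homothety y t '' convexHull ℝ (T : Set F) := by
  obtain ⟨C, hC, hC1⟩ := ((eventually_exists_nonneg_sum_smul_eq_sum_le (· - y) T).and
    (eventually_ge_atTop 1)).exists
  refine ⟨C⁻¹, by positivity, fun t ht b ⟨hb, hbd⟩ => ?_⟩
  rcases ht.eq_or_lt with rfl | ht
  · rw [zero_mul, closedBall_zero, Set.mem_singleton_iff] at hbd
    exact ⟨y, hy, by simp [hbd]⟩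
  obtain ⟨d, hd, hd1, hdb⟩ := mem_convexHull'.1 hb
  have hdiff : ∑ x ∈ T, (t⁻¹ * d x) • (x - y) = t⁻¹ • (b - y) := by
    simp only [mul_smul, ← smul_sum, smul_sub, sum_sub_distrib, ← sum_smul, hd1, hdb, one_smul]
  obtain ⟨c, hc, hcsum, hc1⟩ := hC _ fun x hx => mul_nonneg (inv_nonneg.2 ht.le) (hd x hx)
  rw [hdiff] at hcsum hc1
  refine ⟨y + t⁻¹ • (b - y), ?_, ?_⟩
  · rw [← hcsum]
    refine add_sum_smul_sub_mem_convexHull hy hc (hc1.trans ?_)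
    rw [norm_smul, Real.norm_eq_abs, abs_of_pos (inv_pos.2 ht), ← dist_eq_norm]
    calc C * (t⁻¹ * dist b y) ≤ C * (t⁻¹ * (t * C⁻¹)) := by gcongr; exact hbd
      _ = 1 := by field_simp
  · rw [AffineMap.homothety_apply, vsub_eq_sub, vadd_eq_add, add_sub_cancel_left,
      smul_inv_smul₀ ht.ne', sub_add_cancel]

theorem Bornology.IsBounded.exists_forall_dist_smul_add_one_sub_smul_lt {E : Type*}
    [SeminormedAddCommGroup E] [NormedSpace ℝ E] {K : Set E} (hK : Bornology.IsBounded K)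
    (a : E) {r : ℝ} (hr : 0 < r) :
    ∃ t : ℝ, 0 < t ∧ t ≤ 1 ∧ ∀ x ∈ K, dist (t • x + (1 - t) • a) a < r := by
  obtain ⟨D, hD⟩ := (isBounded_iff_subset_closedBall a).1 hK
  obtain ⟨t, ht0, htD⟩ := exists_pos_mul_lt hr D
  refine ⟨min t 1, by positivity, min_le_right t 1, fun x hx => ?_⟩
  have hxa : dist x a ≤ D := hD hx
  rw [dist_eq_norm, show min t 1 • x + (1 - min t 1) • a - a = min t 1 • (x - a) by module,
    norm_smul, Real.norm_of_nonneg (by positivity), ← dist_eq_norm]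
  rcases le_or_gt 0 D with hD0 | hD0
  · nlinarith [min_le_left t 1, dist_nonneg (x := x) (y := a)]
  · nlinarith [dist_nonneg (x := x) (y := a)]

end Normed

theorem isOpenMap_of_forall_ball_subset_image {α β : Type*} [PseudoMetricSpace α]
    [PseudoMetricSpace β] {f : α → β} (h : ∀ a, ∀ r > 0, ∃ δ > 0, ball (f a) δ ⊆ f '' ball a r) :
    IsOpenMap f :=
  IsOpenMap.of_nhds_le fun a => (nhds_basis_ball.map f).ge_iff.2 fun r hr =>
    mem_nhds_iff.2 (h a r hr)

theorem affine_surjection_of_polytopes_isOpenMap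
    {E F : Type*}
    [NormedAddCommGroup E] [NormedSpace ℝ E]
    [NormedAddCommGroup F] [NormedSpace ℝ F]
    (S : Finset E) (T : Finset F)
    (f : (convexHull ℝ (S : Set E)) → (convexHull ℝ (T : Set F)))
    (haff : ∀ (x y : (convexHull ℝ (S : Set E))) (t : ℝ) (ht0 : 0 ≤ t) (ht1 : t ≤ 1),
      (f ⟨t • (x : E) + (1 - t) • (y : E),
          (convex_convexHull ℝ (S : Set E)) x.2 y.2 ht0 (by linarith) (by ring)⟩ : F)
        = t • (f x : F) + (1 - t) • (f y : F))
    (hsurj : Function.Surjective f) :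
    IsOpenMap f := by
  refine isOpenMap_of_forall_ball_subset_image fun a r hr => ?_
  obtain ⟨ε, hε, hhom⟩ := T.exists_pos_convexHull_inter_closedBall_subset_homothety_image (f a).2
  obtain ⟨t, ht0, ht1, htr⟩ := (S.finite_toSet.isCompact_convexHull (𝕜 := ℝ)).isBounded
    |>.exists_forall_dist_smul_add_one_sub_smul_lt (a : E) hr
  refine ⟨t * ε, by positivity, fun b hb => ?_⟩
  obtain ⟨z, hz, hzb⟩ := hhom t ht0.le ⟨b.2, (mem_ball.1 hb).le⟩
  obtain ⟨x, hxz⟩ := hsurj ⟨z, hz⟩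
  refine ⟨⟨t • (x : E) + (1 - t) • (a : E),
    (convex_convexHull ℝ _) x.2 a.2 ht0.le (by linarith) (by ring)⟩, htr x x.2, Subtype.ext ?_⟩
  rw [haff x a t ht0.le ht1, hxz, ← hzb, AffineMap.homothety_apply]
  simp only [vsub_eq_sub, vadd_eq_add]
  module
end

section
/- For finite sets X, Y, Z, T (with discrete topology) and maps f : X → Y, g : X → Z, p : Y → T, q : Z → T with p∘f = q∘g and (f,g) : X → Y ×_T Z surjective, the induced affine map (P(f),P(g)) : P(X) → P(Y) ×_{P(T)} P(Z) between the simplex of probability distributions on X and the polytope of compatible pairs of distributions is both surjective and open. -/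
def pushforward {X Y : Type*} [Fintype X] [DecidableEq Y]
    (f : X → Y) (μ : X → ℝ) : Y → ℝ :=
  fun y => ∑ x, if f x = y then μ x else 0

lemma pushforward_mem_stdSimplex {X Y : Type*} [Fintype X] [Fintype Y] [DecidableEq Y]
    (f : X → Y) {μ : X → ℝ} (hμ : μ ∈ stdSimplex ℝ X) :
    pushforward f μ ∈ stdSimplex ℝ Y := by
  constructor
  · intro y
    exact Finset.sum_nonneg fun x _ => by by_cases h : f x = y <;> simp [h, hμ.1 x]
  · calc ∑ y, pushforward f μ y = ∑ y, ∑ x, if f x = y then μ x else 0 := rfl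
      _ = ∑ x, ∑ y, if f x = y then μ x else 0 := Finset.sum_comm
      _ = ∑ x, μ x := by simp
      _ = 1 := hμ.2

lemma pushforward_comp {X Y T : Type*} [Fintype X] [Fintype Y] [DecidableEq Y]
    [DecidableEq T] (f : X → Y) (p : Y → T) (μ : X → ℝ) :
    pushforward p (pushforward f μ) = pushforward (p ∘ f) μ := by
  funext t
  unfold pushforward
  have h : ∀ y, (if p y = t then (∑ x, if f x = y then μ x else 0) else 0)
      = ∑ x, if p y = t then (if f x = y then μ x else 0) else 0 := fun y => by
    split <;> simp
  rw [Finset.sum_congr rfl (fun y _ => h y), Finset.sum_comm]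
  refine Finset.sum_congr rfl fun x _ => ?_
  have h2 : ∀ y, (if p y = t then if f x = y then μ x else 0 else 0)
      = if f x = y then (if p (f x) = t then μ x else 0) else 0 := fun y => by
    by_cases hy : f x = y
    · subst hy; simp
    · simp [hy]
  rw [Finset.sum_congr rfl (fun y _ => h2 y)]
  simp [Function.comp]

lemma sum_pushforward {X Y : Type*} [Fintype X] [Fintype Y] [DecidableEq Y]
    (f : X → Y) (μ : X → ℝ) : ∑ y, pushforward f μ y = ∑ x, μ x := by
  unfold pushforward
  rw [Finset.sum_comm]
  simp

lemma pushforward_combo {X Y : Type*} [Fintype X] [DecidableEq Y]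
    (f : X → Y) (a b : ℝ) (μ σ : X → ℝ) :
    pushforward f (fun x => a * μ x + b * σ x)
      = fun y => a * pushforward f μ y + b * pushforward f σ y := by
  funext y
  unfold pushforward
  rw [Finset.mul_sum, Finset.mul_sum, ← Finset.sum_add_distrib]
  refine Finset.sum_congr rfl fun x _ => ?_
  split <;> simp

lemma coord_le_one {X : Type*} [Fintype X] {μ : X → ℝ} (hμ : μ ∈ stdSimplex ℝ X) (x : X) :
    μ x ≤ 1 := by
  rw [← hμ.2]
  exact Finset.single_le_sum (fun i _ => hμ.1 i) (Finset.mem_univ x)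

lemma exists_preimage
    {X Y Z T : Type*} [Fintype X] [Fintype Y] [Fintype Z] [Fintype T]
    [DecidableEq Y] [DecidableEq Z] [DecidableEq T]
    (f : X → Y) (g : X → Z) (p : Y → T) (q : Z → T)
    (hcomm : p ∘ f = q ∘ g)
    (hbi : Function.Surjective
      (fun x : X => (⟨(f x, g x), congrFun hcomm x⟩ :
        {yz : Y × Z // p yz.1 = q yz.2})))
    (ν : Y → ℝ) (lam : Z → ℝ)
    (hν : ν ∈ stdSimplex ℝ Y) (hlam : lam ∈ stdSimplex ℝ Z)
    (hpq : pushforward p ν = pushforward q lam) :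
    ∃ μ ∈ stdSimplex ℝ X, pushforward f μ = ν ∧ pushforward g μ = lam := by
  classical
  obtain ⟨s, hs⟩ := hbi.hasRightInverse
  set τ : T → ℝ := pushforward p ν with hτ
  have hτ0 : ∀ t, 0 ≤ τ t :=
    fun t => Finset.sum_nonneg fun y _ => by by_cases h : p y = t <;> simp [h, hν.1 y]
  -- weight on pairs
  set wt : Y × Z → ℝ := fun yz =>
    if τ (p yz.1) = 0 then 0 else ν yz.1 * lam yz.2 / τ (p yz.1) with hwt
  have hwt0 : ∀ yz, 0 ≤ wt yz := fun yz => by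
    rw [hwt]
    dsimp only
    split
    · exact le_refl 0
    · exact div_nonneg (mul_nonneg (hν.1 _) (hlam.1 _)) (hτ0 _)
  have hfs : ∀ w : {yz : Y × Z // p yz.1 = q yz.2}, f (s w) = w.1.1 := fun w =>
    congrArg (fun u => u.1.1) (hs w)
  have hgs : ∀ w : {yz : Y × Z // p yz.1 = q yz.2}, g (s w) = w.1.2 := fun w =>
    congrArg (fun u => u.1.2) (hs w)
  -- key fact: if τ (p y) = 0 then ν y = 0
  have hν0 : ∀ y, τ (p y) = 0 → ν y = 0 := by
    intro y h0
    have h1 : ∀ y' ∈ Finset.univ, 0 ≤ if p y' = p y then ν y' else 0 :=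
      fun y' _ => by by_cases h : p y' = p y <;> simp [h, hν.1 y']
    have := (Finset.sum_eq_zero_iff_of_nonneg h1).mp h0 y (Finset.mem_univ y)
    simpa using this
  have hlam0 : ∀ z, τ (q z) = 0 → lam z = 0 := by
    intro z h0
    rw [hpq] at h0
    have h1 : ∀ z' ∈ Finset.univ, 0 ≤ if q z' = q z then lam z' else 0 :=
      fun z' _ => by by_cases h : q z' = q z <;> simp [h, hlam.1 z']
    have := (Finset.sum_eq_zero_iff_of_nonneg h1).mp h0 z (Finset.mem_univ z)
    simpa using this
  set μ : X → ℝ := pushforward s (fun w => wt w.1) with hμdef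
  have hμ0 : ∀ x, 0 ≤ μ x := fun x =>
    Finset.sum_nonneg fun w _ => by by_cases h : s w = x <;> simp [h, hwt0 w.1]
  -- marginal computations
  have hmargf : pushforward f μ = ν := by
    funext y0
    rw [hμdef, pushforward_comp]
    have hfs' : (f ∘ s) = fun w : {yz : Y × Z // p yz.1 = q yz.2} => w.1.1 :=
      funext hfs
    rw [hfs']
    unfold pushforward
    rw [← Finset.sum_subtype (Finset.univ.filter (fun yz : Y × Z => p yz.1 = q yz.2))
      (by simp) (fun yz : Y × Z => if yz.1 = y0 then wt yz else 0)]
    rw [Finset.sum_filter]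
    rw [Fintype.sum_prod_type]
    have hswap : ∀ y z, (if p (y, z).1 = q (y, z).2 then if (y, z).1 = y0 then wt (y, z) else 0 else 0)
        = if y = y0 then (if p y = q z then wt (y, z) else 0) else 0 := by
      intro y z
      by_cases h1 : y = y0 <;> by_cases h2 : p y = q z <;> simp [h1, h2]
    simp_rw [hswap]
    rw [Finset.sum_comm]
    rw [Finset.sum_congr rfl (fun z _ => Finset.sum_ite_eq' Finset.univ y0 _)]
    simp only [Finset.mem_univ, if_true]
    by_cases h0 : τ (p y0) = 0
    · rw [hν0 y0 h0]
      refine Finset.sum_eq_zero fun z _ => ?_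
      by_cases h : p y0 = q z
      · rw [if_pos h, hwt]
        dsimp only
        rw [if_pos h0]
      · rw [if_neg h]
    · have key : ∀ z, (if p y0 = q z then wt (y0, z) else 0)
          = ν y0 / τ (p y0) * (if q z = p y0 then lam z else 0) := by
        intro z
        by_cases h : p y0 = q z
        · rw [if_pos h, if_pos h.symm, hwt]
          dsimp only
          rw [if_neg h0]
          ring
        · rw [if_neg h, if_neg (fun hh => h hh.symm), mul_zero]
      simp_rw [key]
      rw [← Finset.mul_sum]
      have hτval : (∑ z, if q z = p y0 then lam z else 0) = τ (p y0) :=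
        (congrFun hpq (p y0)).symm
      rw [hτval]
      exact div_mul_cancel₀ _ h0
  have hmargg : pushforward g μ = lam := by
    funext z0
    rw [hμdef, pushforward_comp]
    have hgs' : (g ∘ s) = fun w : {yz : Y × Z // p yz.1 = q yz.2} => w.1.2 :=
      funext hgs
    rw [hgs']
    unfold pushforward
    rw [← Finset.sum_subtype (Finset.univ.filter (fun yz : Y × Z => p yz.1 = q yz.2))
      (by simp) (fun yz : Y × Z => if yz.2 = z0 then wt yz else 0)]
    rw [Finset.sum_filter]
    rw [Fintype.sum_prod_type]
    have hswap : ∀ y z, (if p (y, z).1 = q (y, z).2 then if (y, z).2 = z0 then wt (y, z) else 0 else 0)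
        = if z = z0 then (if p y = q z then wt (y, z) else 0) else 0 := by
      intro y z
      by_cases h1 : z = z0 <;> by_cases h2 : p y = q z <;> simp [h1, h2]
    simp_rw [hswap]
    rw [Finset.sum_congr rfl (fun y _ => Finset.sum_ite_eq' Finset.univ z0 _)]
    simp only [Finset.mem_univ, if_true]
    by_cases h0 : τ (q z0) = 0
    · rw [hlam0 z0 h0]
      refine Finset.sum_eq_zero fun y _ => ?_
      by_cases h : p y = q z0
      · rw [if_pos h, hwt]
        dsimp only
        rw [if_pos (by rw [h]; exact h0)]
      · rw [if_neg h]
    · have key : ∀ y, (if p y = q z0 then wt (y, z0) else 0)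
          = lam z0 / τ (q z0) * (if p y = q z0 then ν y else 0) := by
        intro y
        by_cases h : p y = q z0
        · rw [if_pos h, if_pos h, hwt]
          dsimp only
          rw [show τ (p y) = τ (q z0) by rw [h], if_neg h0]
          ring
        · rw [if_neg h, if_neg h, mul_zero]
      simp_rw [key]
      rw [← Finset.mul_sum]
      have hτval : (∑ y, if p y = q z0 then ν y else 0) = τ (q z0) := rfl
      rw [hτval]
      exact div_mul_cancel₀ _ h0
  refine ⟨μ, ⟨hμ0, ?_⟩, hmargf, hmargg⟩
  rw [← sum_pushforward f μ, hmargf, hν.2]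

theorem finite_bicommutative_open_surjective
    {X Y Z T : Type*} [Fintype X] [Fintype Y] [Fintype Z] [Fintype T]
    [DecidableEq Y] [DecidableEq Z] [DecidableEq T]
    (f : X → Y) (g : X → Z) (p : Y → T) (q : Z → T)
    (hcomm : p ∘ f = q ∘ g)
    (hbi : Function.Surjective
      (fun x : X => (⟨(f x, g x), congrFun hcomm x⟩ :
        {yz : Y × Z // p yz.1 = q yz.2}))) :
    Function.Surjective
      (fun μ : stdSimplex ℝ X =>
        (⟨(pushforward f μ.1, pushforward g μ.1),
          ⟨⟨pushforward_mem_stdSimplex f μ.2, pushforward_mem_stdSimplex g μ.2⟩,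
            by rw [pushforward_comp, pushforward_comp, hcomm]⟩⟩ :
          {nl : (Y → ℝ) × (Z → ℝ) //
            (nl.1 ∈ stdSimplex ℝ Y ∧ nl.2 ∈ stdSimplex ℝ Z) ∧
              pushforward p nl.1 = pushforward q nl.2})) ∧
    IsOpenMap
      (fun μ : stdSimplex ℝ X =>
        (⟨(pushforward f μ.1, pushforward g μ.1),
          ⟨⟨pushforward_mem_stdSimplex f μ.2, pushforward_mem_stdSimplex g μ.2⟩,
            by rw [pushforward_comp, pushforward_comp, hcomm]⟩⟩ :
          {nl : (Y → ℝ) × (Z → ℝ) //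
            (nl.1 ∈ stdSimplex ℝ Y ∧ nl.2 ∈ stdSimplex ℝ Z) ∧
              pushforward p nl.1 = pushforward q nl.2})) := by
  classical
  constructor
  · rintro ⟨⟨ν, lam⟩, ⟨⟨hν, hlam⟩, hpq⟩⟩
    obtain ⟨μ, hμ, h1, h2⟩ := exists_preimage f g p q hcomm hbi ν lam hν hlam hpq
    exact ⟨⟨μ, hμ⟩, Subtype.ext (Prod.ext h1 h2)⟩
  · intro U hU
    rw [Metric.isOpen_iff]
    rintro k hk
    obtain ⟨μs, hμU, rfl⟩ := hk
    obtain ⟨ε, hε, hball⟩ := Metric.isOpen_iff.mp hU μs hμU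
    set μ : X → ℝ := μs.1 with hμdef
    set ν : Y → ℝ := pushforward f μ with hνdef
    set lam : Z → ℝ := pushforward g μ with hlamdef
    have hν : ν ∈ stdSimplex ℝ Y := pushforward_mem_stdSimplex f μs.2
    have hlam : lam ∈ stdSimplex ℝ Z := pushforward_mem_stdSimplex g μs.2
    have hpq : pushforward p ν = pushforward q lam := by
      rw [hνdef, hlamdef, pushforward_comp, pushforward_comp, hcomm]
    set δ : ℝ := min (ε / 2) 1 with hδdef
    have hδ0 : 0 < δ := lt_min (by linarith) one_pos
    have hδ1 : δ ≤ 1 := min_le_right _ _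
    have hδε : δ < ε := lt_of_le_of_lt (min_le_left _ _) (by linarith)
    set S : Finset ℝ := insert (1 : ℝ)
      (((Finset.univ.image ν).filter (fun a => 0 < a)) ∪
       ((Finset.univ.image lam).filter (fun a => 0 < a))) with hSdef
    have hSne : S.Nonempty := ⟨1, Finset.mem_insert_self _ _⟩
    set m : ℝ := S.min' hSne with hmdef
    have hSpos : ∀ a ∈ S, 0 < a := by
      intro a ha
      simp only [hSdef, Finset.mem_insert, Finset.mem_union, Finset.mem_filter,
        Finset.mem_image] at ha
      rcases ha with rfl | h | h
      · exact one_pos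
      · exact h.2
      · exact h.2
    have hm0 : 0 < m := hSpos m (S.min'_mem hSne)
    have hmν : ∀ y, 0 < ν y → m ≤ ν y := fun y hy =>
      S.min'_le _ (Finset.mem_insert_of_mem (Finset.mem_union_left _
        (Finset.mem_filter.mpr ⟨Finset.mem_image_of_mem ν (Finset.mem_univ y), hy⟩)))
    have hmlam : ∀ z, 0 < lam z → m ≤ lam z := fun z hz =>
      S.min'_le _ (Finset.mem_insert_of_mem (Finset.mem_union_right _
        (Finset.mem_filter.mpr ⟨Finset.mem_image_of_mem lam (Finset.mem_univ z), hz⟩)))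
    refine ⟨δ * m, mul_pos hδ0 hm0, ?_⟩
    rintro ⟨⟨ν', lam'⟩, ⟨⟨hν', hlam'⟩, hpq'⟩⟩ hk'
    rw [Metric.mem_ball] at hk'
    have hk2 : dist ((ν', lam') : (Y → ℝ) × (Z → ℝ)) ((ν, lam)) < δ * m := hk'
    have hd1 : ∀ y, |ν' y - ν y| < δ * m := by
      intro y
      calc |ν' y - ν y| = dist (ν' y) (ν y) := (Real.dist_eq _ _).symm
        _ ≤ dist ν' ν := dist_le_pi_dist ν' ν y
        _ ≤ dist ((ν', lam') : (Y → ℝ) × (Z → ℝ)) ((ν, lam)) := by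
            rw [Prod.dist_eq]; exact le_max_left _ _
        _ < δ * m := hk2
    have hd2 : ∀ z, |lam' z - lam z| < δ * m := by
      intro z
      calc |lam' z - lam z| = dist (lam' z) (lam z) := (Real.dist_eq _ _).symm
        _ ≤ dist lam' lam := dist_le_pi_dist lam' lam z
        _ ≤ dist ((ν', lam') : (Y → ℝ) × (Z → ℝ)) ((ν, lam)) := by
            rw [Prod.dist_eq]; exact le_max_right _ _
        _ < δ * m := hk2
    -- the auxiliary target point
    have hσν_mem : (fun y => ν y + (ν' y - ν y) / δ) ∈ stdSimplex ℝ Y := by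
      constructor
      · intro y
        show 0 ≤ ν y + (ν' y - ν y) / δ
        rcases lt_or_eq_of_le (hν.1 y) with hy | hy
        · have h1 : |ν' y - ν y| < δ * ν y :=
            lt_of_lt_of_le (hd1 y) (by nlinarith [hmν y hy])
          have h2 := abs_lt.mp h1
          have h3 : -(ν y) ≤ (ν' y - ν y) / δ := by
            rw [le_div_iff₀ hδ0]; nlinarith [h2.1]
          linarith
        · rw [← hy]
          simp only [sub_zero, zero_add]
          exact div_nonneg (hν'.1 y) hδ0.le
      · rw [Finset.sum_add_distrib, ← Finset.sum_div, Finset.sum_sub_distrib,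
          hν.2, hν'.2]
        simp
    have hσlam_mem : (fun z => lam z + (lam' z - lam z) / δ) ∈ stdSimplex ℝ Z := by
      constructor
      · intro z
        show 0 ≤ lam z + (lam' z - lam z) / δ
        rcases lt_or_eq_of_le (hlam.1 z) with hz | hz
        · have h1 : |lam' z - lam z| < δ * lam z :=
            lt_of_lt_of_le (hd2 z) (by nlinarith [hmlam z hz])
          have h2 := abs_lt.mp h1
          have h3 : -(lam z) ≤ (lam' z - lam z) / δ := by
            rw [le_div_iff₀ hδ0]; nlinarith [h2.1]
          linarith
        · rw [← hz]
          simp only [sub_zero, zero_add]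
          exact div_nonneg (hlam'.1 z) hδ0.le
      · rw [Finset.sum_add_distrib, ← Finset.sum_div, Finset.sum_sub_distrib,
          hlam.2, hlam'.2]
        simp
    have hcombν : (fun y => ν y + (ν' y - ν y) / δ)
        = fun y => (1 - 1/δ) * ν y + (1/δ) * ν' y := by
      funext y; ring
    have hcomblam : (fun z => lam z + (lam' z - lam z) / δ)
        = fun z => (1 - 1/δ) * lam z + (1/δ) * lam' z := by
      funext z; ring
    have hσpq : pushforward p (fun y => ν y + (ν' y - ν y) / δ)
        = pushforward q (fun z => lam z + (lam' z - lam z) / δ) := by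
      rw [hcombν, hcomblam, pushforward_combo, pushforward_combo]
      funext t
      rw [congrFun hpq t, congrFun hpq' t]
    obtain ⟨σ, hσ, hσf, hσg⟩ := exists_preimage f g p q hcomm hbi _ _
      hσν_mem hσlam_mem hσpq
    have hμ'mem : (fun x => (1 - δ) * μ x + δ * σ x) ∈ stdSimplex ℝ X := by
      constructor
      · intro x
        exact add_nonneg (mul_nonneg (by linarith) (μs.2.1 x))
          (mul_nonneg hδ0.le (hσ.1 x))
      · rw [Finset.sum_add_distrib, ← Finset.mul_sum, ← Finset.mul_sum,
          μs.2.2, hσ.2]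
        ring
    have hdμ : dist (⟨fun x => (1 - δ) * μ x + δ * σ x, hμ'mem⟩ :
        stdSimplex ℝ X) μs < ε := by
      have hle : dist (fun x => (1 - δ) * μ x + δ * σ x) μ ≤ δ := by
        rw [dist_pi_le_iff hδ0.le]
        intro x
        rw [Real.dist_eq]
        have h1 : (1 - δ) * μ x + δ * σ x - μ x = δ * (σ x - μ x) := by ring
        rw [h1, abs_mul, abs_of_pos hδ0]
        have h2 : |σ x - μ x| ≤ 1 := abs_le.mpr
          ⟨by linarith [coord_le_one μs.2 x, hσ.1 x],
           by linarith [coord_le_one hσ x, μs.2.1 x]⟩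
        nlinarith
      calc dist (⟨fun x => (1 - δ) * μ x + δ * σ x, hμ'mem⟩ :
            stdSimplex ℝ X) μs
          = dist (fun x => (1 - δ) * μ x + δ * σ x) μ := rfl
        _ ≤ δ := hle
        _ < ε := hδε
    refine ⟨⟨fun x => (1 - δ) * μ x + δ * σ x, hμ'mem⟩,
      hball (Metric.mem_ball.mpr hdμ), ?_⟩
    apply Subtype.ext
    refine Prod.ext ?_ ?_
    · show pushforward f (fun x => (1 - δ) * μ x + δ * σ x) = ν'
      rw [pushforward_combo, hσf]
      funext y
      have hcancel : δ * ((ν' y - ν y) / δ) = ν' y - ν y :=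
        mul_div_cancel₀ _ hδ0.ne'
      dsimp only
      rw [mul_add, hcancel]
      ring
    · show pushforward g (fun x => (1 - δ) * μ x + δ * σ x) = lam'
      rw [pushforward_combo, hσg]
      funext z
      have hcancel : δ * ((lam' z - lam z) / δ) = lam' z - lam z :=
        mul_div_cancel₀ _ hδ0.ne'
      dsimp only
      rw [mul_add, hcancel]
      ring
end

section
/- Every continuous surjection with compact Hausdorff domain and Hausdorff codomain whose pushforward on probability measures is open must itself be open; that is, if P(f) : P(X) → P(Y) is open then f : X → Y is open, where X, Y are compact Hausdorff and f is a continuous surjection. -/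
open MeasureTheory Filter Topology
open scoped ENNReal

/-!
For a neighbourhood `U` of `x`, a Urysohn function `g` for `x` and `(interior U)ᶜ` shows that every
probability measure near `δ_x` charges `U`, since `∫ g` depends continuously on the measure. Openness of
`P(f)` at `δ_x` then makes every Dirac mass `δ_y` with `y` near `f x` the pushforward of such a
measure `μ`; as `μ` is concentrated on the fibre `f⁻¹' {y}` and charges `U`, that fibre meets `U`.
-/

namespace MeasureTheory

lemma diracProba_map {X Y : Type*} [MeasurableSpace X] [MeasurableSpace Y] {f : X → Y}
    (hf : Measurable f) (x : X) :
    (diracProba x).map hf.aemeasurable = diracProba (f x) :=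
  Subtype.ext <| Measure.map_dirac' hf x

lemma eventually_measure_ne_zero_nhds_diracProba {X : Type*} [TopologicalSpace X]
    [CompletelyRegularSpace X] [MeasurableSpace X] [OpensMeasurableSpace X]
    {x : X} {s : Set X} (hs : s ∈ 𝓝 x) :
    ∀ᶠ μ : ProbabilityMeasure X in 𝓝 (diracProba x), (μ : Measure X) s ≠ 0 := by
  obtain ⟨g, hgx, hg_out⟩ := CompletelyRegularSpace.exists_BCNN isOpen_interior.isClosed_compl
    (Set.notMem_compl_iff.mpr (mem_interior_iff_mem_nhds.mpr hs))
  have hg_dirac : ∫⁻ z, g z ∂(diracProba x : Measure X) = 1 := by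
    simp [diracProba, lintegral_dirac' _ g.measurable_coe_ennreal_comp, hgx]
  have hg_cont : Tendsto (fun μ : ProbabilityMeasure X ↦ ∫⁻ z, g z ∂(μ : Measure X))
      (𝓝 (diracProba x)) (𝓝 1) :=
    hg_dirac ▸ ProbabilityMeasure.tendsto_iff_forall_lintegral_tendsto.mp tendsto_id g
  have hg_support : (fun z ↦ (g z : ℝ≥0∞)).support ⊆ interior s := fun z hz ↦ by
    by_contra hz_out
    simp [hg_out z hz_out] at hz
  filter_upwards [hg_cont.eventually_ne one_ne_zero] with μ hμ hμs
  refine hμ ?_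
  rw [← setLIntegral_eq_of_support_subset hg_support]
  exact setLIntegral_measure_zero _ _ (measure_mono_null interior_subset hμs)

lemma mem_image_of_map_eq_dirac {X Y : Type*} [MeasurableSpace X] [MeasurableSpace Y]
    [MeasurableSingletonClass Y] {f : X → Y} (hf : Measurable f) {μ : Measure X} {y : Y}
    (hμ : μ.map f = Measure.dirac y) {s : Set X} (hs : μ s ≠ 0) :
    y ∈ f '' s := by
  by_contra hy
  have hs_sub : s ⊆ f ⁻¹' {y}ᶜ := fun x hx hfx ↦ hy ⟨x, hx, hfx⟩
  refine hs (measure_mono_null hs_sub ?_)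
  rw [← Measure.map_apply hf (measurableSet_singleton y).compl, hμ]
  simp

end MeasureTheory

theorem isOpenMap_of_pushforward_isOpenMap_general
    {X Y : Type*}
    [TopologicalSpace X] [CompactSpace X] [T2Space X] [MeasurableSpace X] [BorelSpace X]
    [TopologicalSpace Y] [T2Space Y] [MeasurableSpace Y] [BorelSpace Y]
    (f : X → Y) (hf : Continuous f)
    (hPf : IsOpenMap (fun μ : ProbabilityMeasure X =>
      μ.map hf.measurable.aemeasurable)) :
    IsOpenMap f := by
  refine isOpenMap_iff_nhds_le.mpr fun x t ht ↦ ?_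
  have h_near_dirac : ∀ᶠ μ in 𝓝 (diracProba x),
      ∀ y, μ.map hf.measurable.aemeasurable = diracProba y → y ∈ t := by
    filter_upwards [eventually_measure_ne_zero_nhds_diracProba ht] with μ hμ y hy
    refine Set.image_preimage_subset f t (mem_image_of_map_eq_dirac hf.measurable ?_ hμ)
    simpa [diracProba] using congrArg ProbabilityMeasure.toMeasure hy
  have h_near_dirac_image : ∀ᶠ ν in 𝓝 (diracProba (f x)), ∀ y, ν = diracProba y → y ∈ t := by
    rw [← diracProba_map hf.measurable]
    exact hPf.nhds_le _ h_near_dirac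
  exact (continuous_diracProba.tendsto (f x)).eventually h_near_dirac_image |>.mono
    fun y hy ↦ hy y rfl

theorem isOpenMap_of_pushforward_isOpenMap
    {X Y : Type*}
    [TopologicalSpace X] [CompactSpace X] [T2Space X] [MeasurableSpace X] [BorelSpace X]
    [TopologicalSpace Y] [T2Space Y] [MeasurableSpace Y] [BorelSpace Y]
    (f : X → Y) (hf : Continuous f) (hsurj : Function.Surjective f)
    (hPf : IsOpenMap (fun μ : ProbabilityMeasure X =>
      μ.map hf.measurable.aemeasurable)) :
    IsOpenMap f :=
  isOpenMap_of_pushforward_isOpenMap_general f hf hPf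
end
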